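/- arXiv:2301.09940 — 2 statements merged into one kernel-verified Lean document; each statement's English description precedes it below -/
import Mathlib

section
/- Every computable embedding can be converted into a total effective Scott-continuous map: if Γ_e : K ≤_c K' is a computable embedding between classes of structures, there is an effective Scott-continuous function Γ_a : Mod(τ) → Mod(τ') (defined on all of Mod(τ)) agreeing with Γ_e on K, obtained by filtering from W_e all axioms of the forms n ≠ n and n = m (n ≠ m) and adding all axioms n = n. -/
namespace LE

/-- The `n`-th atomic `τ`-formula: a relation symbol together with the list
of (indices of) variables to which it is applied. -/
def atomEnum (n : ℕ) : ℕ × List ℕ := (n.unpair.1, Denumerable.ofNat (List ℕ) n.unpair.2)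

/-- The code of the atomic formula `R_r(x_{v 0}, …)`. -/
def atomCode (r : ℕ) (v : List ℕ) : ℕ := Nat.pair r (Encodable.encode v)

/-- A structure with universe `ω` in a relational vocabulary containing `=`
(relation `0`) and `≠` (relation `1`), each interpreted correctly. -/
def IsStr (S : ℕ → List ℕ → Prop) : Prop :=
  (∀ l, S 0 l ↔ ∃ a, l = [a, a]) ∧ (∀ l, S 1 l ↔ ∃ a b, a ≠ b ∧ l = [a, b])

/-- Isomorphism of structures with universe `ω`. -/
def Iso (S S' : ℕ → List ℕ → Prop) : Prop :=
  ∃ g : ℕ → ℕ, Function.Bijective g ∧ ∀ r l, S r l ↔ S' r (l.map g)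

/-- The positive atomic diagram of a structure, as a subset of `ω`. -/
def Diag (S : ℕ → List ℕ → Prop) : Set ℕ :=
  {n | S (atomEnum n).1 (atomEnum n).2}

/-- The structure whose positive atomic diagram is `D`. -/
def StrOf (D : Set ℕ) : ℕ → List ℕ → Prop :=
  fun r v => atomCode r v ∈ D

/-- The enumeration operator with set of axioms `W`, acting on subsets of `ω`:
`m ∈ W(X)` iff some axiom `(v, m) ∈ W` has its finite set `F_v ⊆ X`. -/
def enumOp (W : Set (ℕ × ℕ)) (X : Set ℕ) : Set ℕ :=
  {m | ∃ v, (v, m) ∈ W ∧ ∀ k ∈ (Denumerable.ofNat (List ℕ) v), k ∈ X}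

/-- `W` is a computably enumerable set of pairs. -/
def CEPairs (W : Set (ℕ × ℕ)) : Prop :=
  ∃ c : Nat.Partrec.Code, W = {p | (c.eval (Nat.pair p.1 p.2)).Dom}

end LE

namespace LE

/-- A subset of `ω` is a valid positive atomic diagram of a structure with
universe `ω` if it contains all sentences `n = n` and no sentence `n ≠ n`
or `n = m` for `n ≠ m` (relation `0` is `=`, relation `1` is `≠`). -/
def ValidDiag (D : Set ℕ) : Prop :=
  (∀ n, atomCode 0 [n, n] ∈ D) ∧
  (∀ n m, n ≠ m → atomCode 0 [n, m] ∉ D) ∧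
  (∀ n, atomCode 1 [n, n] ∉ D)


/-! ### Auxiliary Bool tests -/

/-- Test whether a list is of the form `[a, a]`. -/
def selfb (l : List ℕ) : Bool := decide (l = [l.headI, l.headI])

/-- The list component decoded from `m`. -/
def lst (m : ℕ) : List ℕ := Denumerable.ofNat (List ℕ) m.unpair.2

/-- Test whether the pair coded by `q` is a "good" axiom `(∅, n = n)`. -/
def goodb (q : ℕ) : Bool :=
  decide (q.unpair.1 = 0) && (decide (q.unpair.2.unpair.1 = 0) && selfb (lst q.unpair.2))

/-- Test whether `m` codes a "bad" atomic sentence `n = m` (`n ≠ m`) or `n ≠ n`. -/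
def badb (m : ℕ) : Bool :=
  (decide (m.unpair.1 = 0) && (decide ((lst m).length = 2) && !selfb (lst m))) ||
  (decide (m.unpair.1 = 1) && selfb (lst m))

lemma primrec_selfb : Primrec selfb :=
  (Primrec.eq.comp Primrec.id
    (Primrec.list_cons.comp Primrec.list_headI
      (Primrec.list_cons.comp Primrec.list_headI (Primrec.const [])))).decide

lemma primrec_lst : Primrec lst :=
  (Primrec.ofNat (List ℕ)).comp (Primrec.snd.comp Primrec.unpair)

lemma primrec_band {f g : ℕ → Bool} (hf : Primrec f) (hg : Primrec g) :
    Primrec fun n => f n && g n :=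
  (Primrec.cond hf hg (Primrec.const false)).of_eq fun n => by cases f n <;> simp

lemma primrec_bor {f g : ℕ → Bool} (hf : Primrec f) (hg : Primrec g) :
    Primrec fun n => f n || g n :=
  (Primrec.cond hf (Primrec.const true) hg).of_eq fun n => by cases f n <;> simp

lemma primrec_bnot {f : ℕ → Bool} (hf : Primrec f) : Primrec fun n => !f n :=
  (Primrec.cond hf (Primrec.const false) (Primrec.const true)).of_eq fun n => by
    cases f n <;> simp

lemma primrec_goodb : Primrec goodb :=
  primrec_band (Primrec.eq.comp (Primrec.fst.comp Primrec.unpair) (Primrec.const 0)).decide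
    (primrec_band
      (Primrec.eq.comp
        (Primrec.fst.comp (Primrec.unpair.comp (Primrec.snd.comp Primrec.unpair)))
        (Primrec.const 0)).decide
      (primrec_selfb.comp (primrec_lst.comp (Primrec.snd.comp Primrec.unpair))))

lemma primrec_badb : Primrec badb :=
  primrec_bor
    (primrec_band (Primrec.eq.comp (Primrec.fst.comp Primrec.unpair) (Primrec.const 0)).decide
      (primrec_band
        (Primrec.eq.comp (Primrec.list_length.comp primrec_lst) (Primrec.const 2)).decide
        (primrec_bnot (primrec_selfb.comp primrec_lst))))
    (primrec_band (Primrec.eq.comp (Primrec.fst.comp Primrec.unpair) (Primrec.const 1)).decide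
      (primrec_selfb.comp primrec_lst))

/-! ### Semantic characterizations -/

lemma selfb_iff {l : List ℕ} : selfb l = true ↔ ∃ a, l = [a, a] := by
  unfold selfb
  constructor
  · intro h
    exact ⟨l.headI, by simpa using h⟩
  · rintro ⟨a, rfl⟩
    simp

lemma eq_atomCode_iff {m r : ℕ} {v : List ℕ} :
    m = atomCode r v ↔ m.unpair.1 = r ∧ lst m = v := by
  constructor
  · rintro rfl
    simp [atomCode, lst, Denumerable.ofNat_encode]
  · rintro ⟨h1, h2⟩
    rw [atomCode, ← h1, ← h2, lst, Denumerable.encode_ofNat, Nat.pair_unpair]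

lemma goodb_iff {q : ℕ} :
    goodb q = true ↔ q.unpair.1 = 0 ∧ ∃ n, q.unpair.2 = atomCode 0 [n, n] := by
  unfold goodb
  simp only [Bool.and_eq_true, decide_eq_true_eq, selfb_iff]
  constructor
  · rintro ⟨h1, h2, a, h3⟩
    exact ⟨h1, a, eq_atomCode_iff.2 ⟨h2, h3⟩⟩
  · rintro ⟨h1, n, h2⟩
    obtain ⟨h2, h3⟩ := eq_atomCode_iff.1 h2
    exact ⟨h1, h2, n, h3⟩

lemma length_two_iff {l : List ℕ} : l.length = 2 ↔ ∃ a b, l = [a, b] := by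
  constructor
  · intro h
    match l, h with
    | [a, b], _ => exact ⟨a, b, rfl⟩
  · rintro ⟨a, b, rfl⟩; rfl

lemma badb_iff {m : ℕ} :
    badb m = true ↔ (∃ a b, a ≠ b ∧ m = atomCode 0 [a, b]) ∨ ∃ a, m = atomCode 1 [a, a] := by
  unfold badb
  simp only [Bool.or_eq_true, Bool.and_eq_true, decide_eq_true_eq, Bool.not_eq_true',
    ← Bool.not_eq_true, selfb_iff, length_two_iff]
  constructor
  · rintro (⟨h1, ⟨a, b, hab⟩, hns⟩ | ⟨h1, a, h2⟩)
    · refine Or.inl ⟨a, b, ?_, eq_atomCode_iff.2 ⟨h1, hab⟩⟩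
      rintro rfl
      exact hns ⟨a, hab⟩
    · exact Or.inr ⟨a, eq_atomCode_iff.2 ⟨h1, h2⟩⟩
  · rintro (⟨a, b, hab, h⟩ | ⟨a, h⟩)
    · obtain ⟨h1, h2⟩ := eq_atomCode_iff.1 h
      refine Or.inl ⟨h1, ⟨a, b, h2⟩, ?_⟩
      rintro ⟨c, hc⟩
      rw [h2] at hc
      obtain ⟨rfl, rfl⟩ : a = c ∧ b = c := by simpa using hc
      exact hab rfl
    · obtain ⟨h1, h2⟩ := eq_atomCode_iff.1 h
      exact Or.inr ⟨h1, a, h2⟩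

/-- Every computable embedding can be converted into a total effective
Scott-continuous map: if the enumeration operator given by the c.e. set `W`
sends every diagram in the class `K` to a valid diagram, then there is a
c.e. set `W'` whose enumeration operator sends *every* subset of `ω` to a
valid diagram and agrees with that of `W` on `K`. -/
theorem computable_embedding_totalization (W : Set (ℕ × ℕ)) (hW : CEPairs W)
    (K : Set (Set ℕ)) (hK : ∀ A ∈ K, ValidDiag (enumOp W A)) :
    ∃ W' : Set (ℕ × ℕ), CEPairs W' ∧
      (∀ X : Set ℕ, ValidDiag (enumOp W' X)) ∧
      ∀ A ∈ K, enumOp W' A = enumOp W A := by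
  obtain ⟨c0, hc0⟩ := hW
  -- the totalized partial function
  set h : ℕ →. ℕ := fun q =>
    Option.casesOn (bif goodb q then Option.none else Option.some q)
      (Part.some 0)
      (fun r => Part.bind
        ((bif badb r.unpair.2 then Option.none else Option.some r : Option ℕ) : Part ℕ)
        (fun s => c0.eval s)) with hh
  have hpart : Partrec h := by
    apply Partrec.optionCasesOn_right
    · exact Computable.cond primrec_goodb.to_comp (Computable.const Option.none)
        Computable.option_some
    · exact Computable.const 0
    · exact Partrec.bind
        (Computable.ofOption
          (Computable.cond
            (primrec_badb.to_comp.comp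
              ((Primrec.snd.comp Primrec.unpair).to_comp.comp Computable.snd))
            (Computable.const Option.none)
            (Computable.option_some.comp Computable.snd)))
        ((Partrec.nat_iff.2 (Nat.Partrec.Code.exists_code.2 ⟨c0, rfl⟩)).comp
          Computable.snd).to₂
  obtain ⟨c, hc⟩ := Nat.Partrec.Code.exists_code.1 (Partrec.nat_iff.1 hpart)
  have hdom : ∀ q : ℕ, (h q).Dom ↔
      (goodb q = true ∨ (badb q.unpair.2 = false ∧ (c0.eval q).Dom)) := by
    intro q
    rw [hh]
    cases hg : goodb q <;> cases hb : badb q.unpair.2 <;>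
      simp [hg, hb, Part.bind, Part.assert, Part.ofOption]
  refine ⟨{p | goodb (Nat.pair p.1 p.2) = true ∨ (badb p.2 = false ∧ p ∈ W)}, ?_, ?_, ?_⟩
  · refine ⟨c, ?_⟩
    ext p
    rw [hc, Set.mem_setOf_eq, Set.mem_setOf_eq, hdom, Nat.unpair_pair]
    rw [hc0]
    rfl
  · intro X
    refine ⟨?_, ?_, ?_⟩
    · intro n
      refine ⟨Encodable.encode ([] : List ℕ), Or.inl ?_, ?_⟩
      · rw [goodb_iff, Nat.unpair_pair]
        exact ⟨rfl, n, rfl⟩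
      · intro k hk
        rw [Denumerable.ofNat_encode] at hk
        exact absurd hk List.not_mem_nil
    · rintro n m hnm ⟨v, hv | ⟨hb, -⟩, -⟩
      · rw [goodb_iff, Nat.unpair_pair] at hv
        obtain ⟨-, a, ha⟩ := hv
        obtain ⟨-, h2⟩ := eq_atomCode_iff.1 ha
        obtain ⟨-, h2'⟩ := eq_atomCode_iff.1 (rfl : atomCode 0 [n,m] = atomCode 0 [n,m])
        rw [h2'] at h2
        obtain ⟨rfl, rfl⟩ : n = a ∧ m = a := by simpa using h2
        exact hnm rfl
      · rw [← Bool.not_eq_true, badb_iff] at hb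
        exact hb (Or.inl ⟨n, m, hnm, rfl⟩)
    · rintro n ⟨v, hv | ⟨hb, -⟩, -⟩
      · rw [goodb_iff, Nat.unpair_pair] at hv
        obtain ⟨-, a, ha⟩ := hv
        obtain ⟨h1, -⟩ := eq_atomCode_iff.1 ha
        obtain ⟨h1', -⟩ := eq_atomCode_iff.1 (rfl : atomCode 1 [n,n] = atomCode 1 [n,n])
        rw [h1'] at h1
        exact absurd h1 one_ne_zero
      · rw [← Bool.not_eq_true, badb_iff] at hb
        exact hb (Or.inr ⟨n, rfl⟩)
  · intro A hA
    obtain ⟨hD1, hD2, hD3⟩ := hK A hA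
    ext m
    constructor
    · rintro ⟨v, hv | ⟨-, hvW⟩, hp⟩
      · rw [goodb_iff, Nat.unpair_pair] at hv
        obtain ⟨-, a, ha⟩ := hv
        have ha' : m = atomCode 0 [a, a] := ha
        exact ha' ▸ hD1 a
      · exact ⟨v, hvW, hp⟩
    · rintro ⟨v, hvW, hp⟩
      have hmem : m ∈ enumOp W A := ⟨v, hvW, hp⟩
      have hb : badb m = false := by
        rw [← Bool.not_eq_true, badb_iff]
        rintro (⟨a, b, hab, rfl⟩ | ⟨a, rfl⟩)
        · exact hD2 a b hab hmem
        · exact hD3 a hmem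
      exact ⟨v, Or.inr ⟨hb, hvW⟩, hp⟩

end LE
end

section
/- Σ^p_1-transfer for equivalence-blown-up linear orders: let A and B be linear orderings with reflexive order ≤, and let Ã, B̃ be obtained by replacing each point with an infinite ≤-cycle class (a congruence ~ with all classes infinite, quotients isomorphic to A and B respectively). If tuples ā in Ã and b̄ in B̃ satisfy the same Σ^p_0 formulas (finite conjunctions of atomic formulas in ≤, =, ≠), then they satisfy the same Σ^p_1 formulas. -/
/-- Atomic formulas in the vocabulary `≤, =, ≠`, with variables given by
indices into an assignment. -/
inductive LAtom : Type
  | le (i j : ℕ)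
  | eq (i j : ℕ)
  | ne (i j : ℕ)

/-- Satisfaction of an atom in the structure `(ω, R)` under assignment `s`. -/
def SatAtom (R : ℕ → ℕ → Prop) (s : ℕ → ℕ) : LAtom → Prop
  | .le i j => R (s i) (s j)
  | .eq i j => s i = s j
  | .ne i j => s i ≠ s j

/-- All variables of the atom are among `x_0, …, x_{n-1}`. -/
def AtomVarsLt (n : ℕ) : LAtom → Prop
  | .le i j => i < n ∧ j < n
  | .eq i j => i < n ∧ j < n
  | .ne i j => i < n ∧ j < n

/-- A `Σ^p_0` formula is a finite conjunction of atoms. -/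
def Sat0 (R : ℕ → ℕ → Prop) (s : ℕ → ℕ) (l : List LAtom) : Prop :=
  ∀ a ∈ l, SatAtom R s a

/-- Satisfaction of the `Σ^p_1` formula `⋁_i ∃ x̄ (⋀ f i)` at a tuple of
length `n` (variables `< n` are free, variables `≥ n` are the quantified ones). -/
def Sat1 (R : ℕ → ℕ → Prop) (n : ℕ) (a : ℕ → ℕ) (f : ℕ → List LAtom) : Prop :=
  ∃ i, ∃ y : ℕ → ℕ, Sat0 R (fun j => if j < n then a j else y j) (f i)

/-- `R` is a total preorder (a "reflexive linear ordering"). -/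
def TotalPreorder (R : ℕ → ℕ → Prop) : Prop :=
  (∀ x, R x x) ∧ (∀ x y z, R x y → R y z → R x z) ∧ (∀ x y, R x y ∨ R y x)

/-- All classes of the induced congruence `x ~ y ↔ x ≤ y ∧ y ≤ x` are infinite. -/
def InfClasses (R : ℕ → ℕ → Prop) : Prop :=
  ∀ x, {y | R x y ∧ R y x}.Infinite

open scoped Classical

section SigmaAux

lemma exists_max_sub (R : ℕ → ℕ → Prop) (hR : TotalPreorder R) (c : ℕ → ℕ) (P : ℕ → Prop) :
    ∀ m : ℕ, (∃ j, j < m ∧ P j) →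
      ∃ j, j < m ∧ P j ∧ ∀ j', j' < m → P j' → R (c j') (c j) := by
  intro m
  induction m with
  | zero => rintro ⟨j, hj, -⟩; omega
  | succ m ih =>
    rintro ⟨j, hj, hPj⟩
    by_cases hPm : P m
    · by_cases hex : ∃ j, j < m ∧ P j
      · obtain ⟨k, hk, hPk, hmax⟩ := ih hex
        rcases hR.2.2 (c k) (c m) with h | h
        · exact ⟨m, by omega, hPm, fun j' hj' hPj' => by
            rcases Nat.lt_succ_iff_lt_or_eq.mp hj' with h' | h'
            · exact hR.2.1 _ _ _ (hmax j' h' hPj') h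
            · subst h'; exact hR.1 _⟩
        · exact ⟨k, by omega, hPk, fun j' hj' hPj' => by
            rcases Nat.lt_succ_iff_lt_or_eq.mp hj' with h' | h'
            · exact hmax j' h' hPj'
            · subst h'; exact h⟩
      · refine ⟨m, by omega, hPm, fun j' hj' hPj' => ?_⟩
        rcases Nat.lt_succ_iff_lt_or_eq.mp hj' with h' | h'
        · exact absurd ⟨j', h', hPj'⟩ hex
        · subst h'; exact hR.1 _
    · have hj2 : j < m := by
        rcases Nat.lt_succ_iff_lt_or_eq.mp hj with h' | h'
        · exact h'
        · subst h'; exact absurd hPj hPm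
      obtain ⟨k, hk, hPk, hmax⟩ := ih ⟨j, hj2, hPj⟩
      exact ⟨k, by omega, hPk, fun j'' hj'' hPj'' => by
        rcases Nat.lt_succ_iff_lt_or_eq.mp hj'' with h'' | h''
        · exact hmax j'' h'' hPj''
        · subst h''; exact absurd hPj'' hPm⟩

lemma exists_min' (R : ℕ → ℕ → Prop) (hR : TotalPreorder R) (c : ℕ → ℕ) (m : ℕ) (hm : 0 < m) :
    ∃ j, j < m ∧ ∀ j', j' < m → R (c j) (c j') := by
  have hflip : TotalPreorder (fun x y => R y x) :=
    ⟨hR.1, fun x y z h1 h2 => hR.2.1 z y x h2 h1, fun x y => hR.2.2 y x⟩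
  obtain ⟨j, hj, -, hmax⟩ := exists_max_sub _ hflip c (fun _ => True) m ⟨0, hm, trivial⟩
  exact ⟨j, hj, fun j' h' => hmax j' h' trivial⟩

/-- the "canonical class" predicate: `j` is an index (below `n`) whose class is
the largest parameter class `≤ v`, or, if there is none, the least parameter class. -/
def PP (R : ℕ → ℕ → Prop) (n : ℕ) (a : ℕ → ℕ) (v j : ℕ) : Prop :=
  j < n ∧ (∀ j', j' < n → R (a j') v → R (a j') (a j)) ∧
    (R (a j) v ∨ ∀ j', j' < n → R (a j) (a j'))

lemma PP_exists (R : ℕ → ℕ → Prop) (hR : TotalPreorder R) (n : ℕ) (a : ℕ → ℕ)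
    (hn : 0 < n) (v : ℕ) : ∃ j, PP R n a v j := by
  by_cases hb : ∃ j, j < n ∧ R (a j) v
  · obtain ⟨j, hj, hPj, hmax⟩ := exists_max_sub R hR a (fun j => R (a j) v) n hb
    exact ⟨j, hj, hmax, Or.inl hPj⟩
  · obtain ⟨j, hj, hmin⟩ := exists_min' R hR a n hn
    exact ⟨j, hj, fun j' h1 h2 => absurd ⟨j', h1, h2⟩ hb, Or.inr hmin⟩

noncomputable def jzero (R : ℕ → ℕ → Prop) (n : ℕ) (a : ℕ → ℕ) (v : ℕ) : ℕ :=
  if h : ∃ j, PP R n a v j then Nat.find h else 0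

lemma jzero_spec (R : ℕ → ℕ → Prop) (hR : TotalPreorder R) (n : ℕ) (a : ℕ → ℕ)
    (hn : 0 < n) (v : ℕ) : PP R n a v (jzero R n a v) := by
  have h := PP_exists R hR n a hn v
  rw [jzero, dif_pos h]
  exact Nat.find_spec h

lemma jzero_zero (R : ℕ → ℕ → Prop) (n : ℕ) (a : ℕ → ℕ) (hn : n = 0) (v : ℕ) :
    jzero R n a v = 0 := by
  rw [jzero, dif_neg]
  rintro ⟨j, hj, -⟩
  omega

/-- if `a j ≤ v` then the canonical class of `v` is above `a j` and below `v`. -/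
lemma jzero_below (R : ℕ → ℕ → Prop) (hR : TotalPreorder R) (n : ℕ) (a : ℕ → ℕ)
    {j v : ℕ} (hj : j < n) (hb : R (a j) v) :
    R (a j) (a (jzero R n a v)) ∧ R (a (jzero R n a v)) v := by
  have hn : 0 < n := Nat.lt_of_le_of_lt (Nat.zero_le j) hj
  obtain ⟨h1, h2, h3⟩ := jzero_spec R hR n a hn v
  refine ⟨h2 j hj hb, ?_⟩
  rcases h3 with h | h
  · exact h
  · exact hR.2.1 _ _ _ (h j hj) hb

lemma jzero_le_param (R : ℕ → ℕ → Prop) (hR : TotalPreorder R) (n : ℕ) (a : ℕ → ℕ)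
    {j v : ℕ} (hj : j < n) (hvw : R v (a j)) : R (a (jzero R n a v)) (a j) := by
  have hn : 0 < n := Nat.lt_of_le_of_lt (Nat.zero_le j) hj
  obtain ⟨h1, h2, h3⟩ := jzero_spec R hR n a hn v
  rcases h3 with h | h
  · exact hR.2.1 _ _ _ h hvw
  · exact h j hj

lemma jzero_mono (R : ℕ → ℕ → Prop) (hR : TotalPreorder R) (n : ℕ) (a : ℕ → ℕ)
    (hn : 0 < n) {v w : ℕ} (hvw : R v w) :
    R (a (jzero R n a v)) (a (jzero R n a w)) := by
  obtain ⟨h1, h2, h3⟩ := jzero_spec R hR n a hn v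
  rcases h3 with h | h
  · exact (jzero_below R hR n a h1 (hR.2.1 _ _ _ h hvw)).1
  · exact h _ (jzero_spec R hR n a hn w).1

lemma PP_equiv (R : ℕ → ℕ → Prop) (hR : TotalPreorder R) (n : ℕ) (a : ℕ → ℕ)
    {v j j' : ℕ} (h1 : PP R n a v j) (h2 : PP R n a v j') :
    R (a j) (a j') ∧ R (a j') (a j) := by
  obtain ⟨hj, hmax, hd⟩ := h1
  obtain ⟨hj', hmax', hd'⟩ := h2
  rcases hd with h | h <;> rcases hd' with h' | h'
  · exact ⟨hmax' j hj h, hmax j' hj' h'⟩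
  · exact ⟨hmax' j hj h, h' j hj⟩
  · exact ⟨h j' hj', hmax j' hj' h'⟩
  · exact ⟨h j' hj', h' j hj⟩

lemma PP_congr (R : ℕ → ℕ → Prop) (hR : TotalPreorder R) (n : ℕ) (a : ℕ → ℕ)
    {v j j0 : ℕ} (hj : j < n) (he1 : R (a j) (a j0)) (he2 : R (a j0) (a j))
    (h : PP R n a v j0) : PP R n a v j := by
  obtain ⟨hj0, hmax, hd⟩ := h
  refine ⟨hj, fun j' h1 h2 => hR.2.1 _ _ _ (hmax j' h1 h2) he2, ?_⟩
  rcases hd with h | h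
  · exact Or.inl (hR.2.1 _ _ _ he1 h)
  · exact Or.inr (fun j' h1 => hR.2.1 _ _ _ he1 (h j' h1))

lemma jzero_canon (R : ℕ → ℕ → Prop) (hR : TotalPreorder R) (n : ℕ) (a : ℕ → ℕ)
    {v w : ℕ} (h1 : R (a (jzero R n a v)) (a (jzero R n a w)))
    (h2 : R (a (jzero R n a w)) (a (jzero R n a v))) :
    jzero R n a v = jzero R n a w := by
  rcases Nat.eq_zero_or_pos n with hn | hn
  · rw [jzero_zero R n a hn, jzero_zero R n a hn]
  · have hv := jzero_spec R hR n a hn v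
    have hw := jzero_spec R hR n a hn w
    have hexv : ∃ j, PP R n a v j := PP_exists R hR n a hn v
    have hexw : ∃ j, PP R n a w j := PP_exists R hR n a hn w
    have key : ∀ j, PP R n a v j ↔ PP R n a w j := by
      intro j
      constructor
      · intro hpj
        have hcl := PP_equiv R hR n a hpj hv
        exact PP_congr R hR n a hpj.1 (hR.2.1 _ _ _ hcl.1 h1) (hR.2.1 _ _ _ h2 hcl.2) hw
      · intro hpj
        have hcl := PP_equiv R hR n a hpj hw
        exact PP_congr R hR n a hpj.1 (hR.2.1 _ _ _ hcl.1 h2) (hR.2.1 _ _ _ h1 hcl.2) hv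
    simp only [jzero, dif_pos hexv, dif_pos hexw]
    have hle1 : Nat.find hexv ≤ Nat.find hexw :=
      Nat.find_le ((key _).mpr (Nat.find_spec hexw))
    have hle2 : Nat.find hexw ≤ Nat.find hexv :=
      Nat.find_le ((key _).mp (Nat.find_spec hexv))
    omega

lemma class_diff_inf (R' : ℕ → ℕ → Prop) (hIR' : InfClasses R') (n : ℕ) (b : ℕ → ℕ) (x : ℕ) :
    ({y | R' x y ∧ R' y x} \ (b '' {i | i < n})).Infinite :=
  (hIR' x).diff ((Set.finite_lt_nat n).image b)

noncomputable def emb (R' : ℕ → ℕ → Prop) (hIR' : InfClasses R') (n : ℕ) (b : ℕ → ℕ)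
    (x m : ℕ) : ℕ :=
  (Set.Infinite.natEmbedding _ (class_diff_inf R' hIR' n b x) m : ℕ)

lemma emb_mem (R' : ℕ → ℕ → Prop) (hIR' : InfClasses R') (n : ℕ) (b : ℕ → ℕ) (x m : ℕ) :
    emb R' hIR' n b x m ∈ ({y | R' x y ∧ R' y x} \ (b '' {i | i < n})) :=
  (Set.Infinite.natEmbedding _ (class_diff_inf R' hIR' n b x) m).2

lemma emb_inj (R' : ℕ → ℕ → Prop) (hIR' : InfClasses R') (n : ℕ) (b : ℕ → ℕ) (x : ℕ)
    {m m' : ℕ} (h : emb R' hIR' n b x m = emb R' hIR' n b x m') : m = m' :=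
  (Set.Infinite.natEmbedding _ (class_diff_inf R' hIR' n b x)).injective (Subtype.ext h)

noncomputable def phi (R R' : ℕ → ℕ → Prop) (hIR' : InfClasses R') (n : ℕ)
    (a b : ℕ → ℕ) (v : ℕ) : ℕ :=
  if h : ∃ j, j < n ∧ a j = v then b (Nat.find h)
  else emb R' hIR' n b (b (jzero R n a v)) v

lemma phi_param (R R' : ℕ → ℕ → Prop) (hIR' : InfClasses R') (n : ℕ) (a b : ℕ → ℕ)
    (heq : ∀ i j, i < n → j < n → a i = a j → b i = b j)
    {j : ℕ} (hj : j < n) : phi R R' hIR' n a b (a j) = b j := by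
  have h : ∃ j', j' < n ∧ a j' = a j := ⟨j, hj, rfl⟩
  rw [phi, dif_pos h]
  obtain ⟨h1, h2⟩ := Nat.find_spec h
  exact heq _ _ h1 hj h2

lemma phi_mono (R R' : ℕ → ℕ → Prop) (hR : TotalPreorder R) (hR' : TotalPreorder R')
    (hIR' : InfClasses R') (n : ℕ) (a b : ℕ → ℕ)
    (hle : ∀ i j, i < n → j < n → R (a i) (a j) → R' (b i) (b j))
    {v w : ℕ} (hvw : R v w) :
    R' (phi R R' hIR' n a b v) (phi R R' hIR' n a b w) := by
  by_cases hv : ∃ j, j < n ∧ a j = v <;> by_cases hw : ∃ j, j < n ∧ a j = w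
  · rw [phi, dif_pos hv, phi, dif_pos hw]
    obtain ⟨hi1, hi2⟩ := Nat.find_spec hv
    obtain ⟨hj1, hj2⟩ := Nat.find_spec hw
    exact hle _ _ hi1 hj1 (by rw [hi2, hj2]; exact hvw)
  · -- v param, w not
    rw [phi, dif_pos hv, phi, dif_neg hw]
    obtain ⟨hi1, hi2⟩ := Nat.find_spec hv
    have hb : R (a (Nat.find hv)) w := by rw [hi2]; exact hvw
    have h1 := (jzero_below R hR n a hi1 hb).1
    have hzn : jzero R n a w < n :=
      (jzero_spec R hR n a (Nat.lt_of_le_of_lt (Nat.zero_le _) hi1) w).1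
    have h2 : R' (b (Nat.find hv)) (b (jzero R n a w)) := hle _ _ hi1 hzn h1
    have h3 := (emb_mem R' hIR' n b (b (jzero R n a w)) w).1
    exact hR'.2.1 _ _ _ h2 h3.1
  · -- v not, w param
    rw [phi, dif_neg hv, phi, dif_pos hw]
    obtain ⟨hj1, hj2⟩ := Nat.find_spec hw
    have hb : R v (a (Nat.find hw)) := by rw [hj2]; exact hvw
    have h1 := jzero_le_param R hR n a hj1 hb
    have hzn : jzero R n a v < n :=
      (jzero_spec R hR n a (Nat.lt_of_le_of_lt (Nat.zero_le _) hj1) v).1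
    have h2 : R' (b (jzero R n a v)) (b (Nat.find hw)) := hle _ _ hzn hj1 h1
    have h3 := (emb_mem R' hIR' n b (b (jzero R n a v)) v).1
    exact hR'.2.1 _ _ _ h3.2 h2
  · -- both not
    rw [phi, dif_neg hv, phi, dif_neg hw]
    have h3 := (emb_mem R' hIR' n b (b (jzero R n a v)) v).1
    have h4 := (emb_mem R' hIR' n b (b (jzero R n a w)) w).1
    rcases Nat.eq_zero_or_pos n with hn | hn
    · rw [jzero_zero R n a hn v, jzero_zero R n a hn w] at *
      exact hR'.2.1 _ _ _ h3.2 h4.1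
    · have h1 := jzero_mono R hR n a hn hvw
      have h2 : R' (b (jzero R n a v)) (b (jzero R n a w)) :=
        hle _ _ (jzero_spec R hR n a hn v).1 (jzero_spec R hR n a hn w).1 h1
      exact hR'.2.1 _ _ _ h3.2 (hR'.2.1 _ _ _ h2 h4.1)

lemma phi_inj (R R' : ℕ → ℕ → Prop) (hR : TotalPreorder R) (hR' : TotalPreorder R')
    (hIR' : InfClasses R') (n : ℕ) (a b : ℕ → ℕ)
    (hle' : ∀ i j, i < n → j < n → R' (b i) (b j) → R (a i) (a j))
    (hne : ∀ i j, i < n → j < n → a i ≠ a j → b i ≠ b j)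
    {v w : ℕ} (hvw : v ≠ w) :
    phi R R' hIR' n a b v ≠ phi R R' hIR' n a b w := by
  by_cases hv : ∃ j, j < n ∧ a j = v <;> by_cases hw : ∃ j, j < n ∧ a j = w
  · rw [phi, dif_pos hv, phi, dif_pos hw]
    obtain ⟨hi1, hi2⟩ := Nat.find_spec hv
    obtain ⟨hj1, hj2⟩ := Nat.find_spec hw
    exact hne _ _ hi1 hj1 (by rw [hi2, hj2]; exact hvw)
  · rw [phi, dif_pos hv, phi, dif_neg hw]
    obtain ⟨hi1, hi2⟩ := Nat.find_spec hv
    intro h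
    exact (emb_mem R' hIR' n b (b (jzero R n a w)) w).2 ⟨Nat.find hv, hi1, h⟩
  · rw [phi, dif_neg hv, phi, dif_pos hw]
    obtain ⟨hj1, hj2⟩ := Nat.find_spec hw
    intro h
    exact (emb_mem R' hIR' n b (b (jzero R n a v)) v).2 ⟨Nat.find hw, hj1, h.symm⟩
  · rw [phi, dif_neg hv, phi, dif_neg hw]
    by_cases hz : jzero R n a v = jzero R n a w
    · rw [hz]
      intro h
      exact hvw (emb_inj R' hIR' n b _ h)
    · intro h
      have m1 := (emb_mem R' hIR' n b (b (jzero R n a v)) v).1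
      have m2 := (emb_mem R' hIR' n b (b (jzero R n a w)) w).1
      have e1 : R' (b (jzero R n a v)) (b (jzero R n a w)) := by
        refine hR'.2.1 _ _ _ m1.1 ?_
        rw [h]; exact m2.2
      have e2 : R' (b (jzero R n a w)) (b (jzero R n a v)) := by
        refine hR'.2.1 _ _ _ m2.1 ?_
        rw [← h]; exact m1.2
      rcases Nat.eq_zero_or_pos n with hn | hn
      · exact hz (by rw [jzero_zero R n a hn, jzero_zero R n a hn])
      · have hzn1 := (jzero_spec R hR n a hn v).1
        have hzn2 := (jzero_spec R hR n a hn w).1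
        exact hz (jzero_canon R hR n a (hle' _ _ hzn1 hzn2 e1) (hle' _ _ hzn2 hzn1 e2))

lemma sat1_mono (R R' : ℕ → ℕ → Prop) (hR : TotalPreorder R) (hR' : TotalPreorder R')
    (hIR' : InfClasses R') (n : ℕ) (a b : ℕ → ℕ)
    (hle : ∀ i j, i < n → j < n → R (a i) (a j) → R' (b i) (b j))
    (hle' : ∀ i j, i < n → j < n → R' (b i) (b j) → R (a i) (a j))
    (heq : ∀ i j, i < n → j < n → a i = a j → b i = b j)
    (hne : ∀ i j, i < n → j < n → a i ≠ a j → b i ≠ b j)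
    (f : ℕ → List LAtom) : Sat1 R n a f → Sat1 R' n b f := by
  rintro ⟨i, y, hy⟩
  set s : ℕ → ℕ := fun j => if j < n then a j else y j with hs
  set Φ : ℕ → ℕ := phi R R' hIR' n a b with hΦ
  refine ⟨i, fun j => Φ (s j), ?_⟩
  have ht : ∀ j, (if j < n then b j else Φ (s j)) = Φ (s j) := by
    intro j
    by_cases hj : j < n
    · rw [if_pos hj]
      have hsj : s j = a j := by rw [hs]; simp [hj]
      rw [hsj, hΦ, phi_param R R' hIR' n a b heq hj]
    · rw [if_neg hj]
  intro atom hatom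
  have h1 := hy atom hatom
  cases atom with
  | le i' j' =>
    simp only [SatAtom] at h1 ⊢
    rw [ht i', ht j']
    exact phi_mono R R' hR hR' hIR' n a b hle h1
  | eq i' j' =>
    simp only [SatAtom] at h1 ⊢
    rw [ht i', ht j']
    exact congrArg Φ h1
  | ne i' j' =>
    simp only [SatAtom] at h1 ⊢
    rw [ht i', ht j']
    exact phi_inj R R' hR hR' hIR' n a b hle' hne h1

end SigmaAux

/-- Σ^p_1-transfer for blown-up linear orders: if tuples in the blow-ups
satisfy the same Σ^p_0 formulas then they satisfy the same Σ^p_1 formulas. -/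


theorem sigma1_transfer (R R' : ℕ → ℕ → Prop)
    (hR : TotalPreorder R) (hR' : TotalPreorder R')
    (hIR : InfClasses R) (hIR' : InfClasses R')
    (n : ℕ) (a b : ℕ → ℕ)
    (h0 : ∀ l : List LAtom, (∀ x ∈ l, AtomVarsLt n x) → (Sat0 R a l ↔ Sat0 R' b l)) :
    ∀ f : ℕ → List LAtom, Sat1 R n a f ↔ Sat1 R' n b f := by
  intro f
  have hle : ∀ i j, i < n → j < n → (R (a i) (a j) ↔ R' (b i) (b j)) := by
    intro i j hi hj
    have := h0 [LAtom.le i j] (by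
      rintro x hx
      simp only [List.mem_singleton] at hx
      subst hx
      exact ⟨hi, hj⟩)
    simpa [Sat0, SatAtom] using this
  have heq : ∀ i j, i < n → j < n → (a i = a j ↔ b i = b j) := by
    intro i j hi hj
    have := h0 [LAtom.eq i j] (by
      rintro x hx
      simp only [List.mem_singleton] at hx
      subst hx
      exact ⟨hi, hj⟩)
    simpa [Sat0, SatAtom] using this
  have hne : ∀ i j, i < n → j < n → (a i ≠ a j ↔ b i ≠ b j) := by
    intro i j hi hj
    exact not_congr (heq i j hi hj)
  constructor
  · exact sat1_mono R R' hR hR' hIR' n a b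
      (fun i j hi hj => (hle i j hi hj).mp)
      (fun i j hi hj => (hle i j hi hj).mpr)
      (fun i j hi hj => (heq i j hi hj).mp)
      (fun i j hi hj => (hne i j hi hj).mp) f
  · exact sat1_mono R' R hR' hR hIR n b a
      (fun i j hi hj => (hle i j hi hj).mpr)
      (fun i j hi hj => (hle i j hi hj).mp)
      (fun i j hi hj => (heq i j hi hj).mpr)
      (fun i j hi hj => (hne i j hi hj).mpr) f
end
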